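/- arXiv:1105.5004 — 3 statements merged into one kernel-verified Lean document; each statement's English description precedes it below -/
import Mathlib

section
/- Posterior medians minimise the unweighted threshold classification loss: Let θ₁,…,θₙ be real random variables on a probability space and C ∈ ℝ a threshold. Let qᵢ = inf{x ∈ ℝ : P(θᵢ ≤ x) ≥ 1/2} be the posterior median of θᵢ. Then the vector of posterior medians q = (q₁,…,qₙ) minimises the expected unweighted threshold classification loss: for every δ ∈ ℝⁿ, E[TCL(C,θ,δ)] ≥ E[TCL(C,θ,q)], where TCL(C,θ,δ) = (1/n)Σᵢ[FP(C,θᵢ,δᵢ) + FN(C,θᵢ,δᵢ)]. -/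
open MeasureTheory

/-- The unweighted threshold classification loss
`TCL(C, θ, δ) = (1/n) Σᵢ [1{θᵢ ≤ C, δᵢ > C} + 1{θᵢ > C, δᵢ ≤ C}]`. -/
noncomputable def TCLu (n : ℕ) (C : ℝ) (θ δ : Fin n → ℝ) : ℝ :=
  (1 / (n : ℝ)) * ∑ i, ((if θ i ≤ C ∧ C < δ i then (1 : ℝ) else 0)
    + (if C < θ i ∧ δ i ≤ C then (1 : ℝ) else 0))

/-!
The expected loss of the decision `d` for a parameter `t` is `P(t ≤ C)` when `d > C` and
`P(t > C)` when `d ≤ C`, so the best decision lies on the side of `C` carrying at least half of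
the mass. By right-continuity of the cdf, the median `m` satisfies `m ≤ C ↔ P(t ≤ C) ≥ 1/2`,
so it always lies on that side.
-/

open Filter Set Topology ProbabilityTheory

theorem StieltjesFunction.csInf_setOf_le_le_iff (f : StieltjesFunction ℝ) {t : ℝ}
    (hne : {x | t ≤ f x}.Nonempty) (hbdd : BddBelow {x | t ≤ f x}) (C : ℝ) :
    sInf {x | t ≤ f x} ≤ C ↔ t ≤ f C := by
  refine ⟨fun h => ?_, fun h => csInf_le hbdd h⟩
  have h_right : ∀ᶠ x in 𝓝[>] C, t ≤ f x := by
    filter_upwards [self_mem_nhdsWithin] with x (hx : C < x)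
    obtain ⟨s, hs, hsx⟩ := exists_lt_of_csInf_lt hne (h.trans_lt hx)
    exact hs.trans (f.mono hsx.le)
  exact ge_of_tendsto ((f.right_continuous C).mono Ioi_subset_Ici_self) h_right

namespace ProbabilityTheory

noncomputable def quantile (ν : Measure ℝ) (p : ℝ) : ℝ :=
  sInf {x | p ≤ cdf ν x}

theorem quantile_le_iff (ν : Measure ℝ) {p : ℝ} (hp₀ : 0 < p) (hp₁ : p < 1) (C : ℝ) :
    quantile ν p ≤ C ↔ p ≤ cdf ν C := by
  refine (cdf ν).csInf_setOf_le_le_iff ?_ ?_ C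
  · exact ((tendsto_cdf_atTop ν).eventually (eventually_ge_nhds hp₁)).exists
  · obtain ⟨a, ha⟩ :=
      ((tendsto_cdf_atBot ν).eventually (eventually_lt_nhds hp₀)).exists_forall_of_atBot
    refine ⟨a, fun x hx => ?_⟩
    by_contra! hxa
    exact (ha x hxa.le).not_ge hx

end ProbabilityTheory

noncomputable def misclassificationLoss (C t d : ℝ) : ℝ :=
  (if t ≤ C ∧ C < d then 1 else 0) + (if C < t ∧ d ≤ C then 1 else 0)

theorem TCLu_eq_sum_misclassificationLoss (n : ℕ) (C : ℝ) (θ δ : Fin n → ℝ) :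
    TCLu n C θ δ = 1 / n * ∑ i, misclassificationLoss C (θ i) (δ i) := rfl

theorem misclassificationLoss_eq_indicator (C d : ℝ) :
    (misclassificationLoss C · d) =
      if C < d then (Iic C).indicator 1 else (Ioi C).indicator 1 := by
  ext t
  rcases lt_or_ge C d with hd | hd
  · simp [misclassificationLoss, indicator, hd, hd.not_ge]
  · simp [misclassificationLoss, indicator, hd, hd.not_gt]

theorem measurable_misclassificationLoss (C d : ℝ) :
    Measurable (misclassificationLoss C · d) := by
  rw [misclassificationLoss_eq_indicator]
  split_ifs
  exacts [measurable_const.indicator measurableSet_Iic,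
    measurable_const.indicator measurableSet_Ioi]

theorem integrable_misclassificationLoss (ν : Measure ℝ) [IsFiniteMeasure ν] (C d : ℝ) :
    Integrable (misclassificationLoss C · d) ν := by
  rw [misclassificationLoss_eq_indicator]
  split_ifs
  exacts [(integrable_const 1).indicator measurableSet_Iic,
    (integrable_const 1).indicator measurableSet_Ioi]

theorem integral_misclassificationLoss (ν : Measure ℝ) [IsProbabilityMeasure ν] (C d : ℝ) :
    ∫ t, misclassificationLoss C t d ∂ν = if C < d then cdf ν C else 1 - cdf ν C := by
  rw [misclassificationLoss_eq_indicator, cdf_eq_real]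
  split_ifs
  · exact integral_indicator_one measurableSet_Iic
  · rw [integral_indicator_one measurableSet_Ioi, ← compl_Iic,
      probReal_compl_eq_one_sub measurableSet_Iic]

theorem integral_misclassificationLoss_median_le (ν : Measure ℝ) [IsProbabilityMeasure ν]
    (C d : ℝ) :
    ∫ t, misclassificationLoss C t (quantile ν (1 / 2)) ∂ν ≤
      ∫ t, misclassificationLoss C t d ∂ν := by
  have median_le_iff := quantile_le_iff ν (p := 1 / 2) (by norm_num) (by norm_num) C
  rw [integral_misclassificationLoss, integral_misclassificationLoss]
  by_cases h : 1 / 2 ≤ cdf ν C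
  · rw [if_neg (median_le_iff.2 h).not_gt]
    split_ifs <;> linarith
  · rw [if_pos (not_le.1 (mt median_le_iff.1 h))]
    split_ifs <;> linarith

/-- **Posterior medians minimise the unweighted threshold classification loss.** -/
theorem tcl_median_optimal
    {Ω : Type*} [MeasurableSpace Ω] (μ : Measure Ω) [IsProbabilityMeasure μ]
    {n : ℕ} (θ : Fin n → Ω → ℝ) (hθ : ∀ i, Measurable (θ i))
    (C : ℝ)
    (q : Fin n → ℝ)
    (hq : ∀ i, q i = sInf {x : ℝ | (1 : ℝ) / 2 ≤ (μ {ω | θ i ω ≤ x}).toReal}) :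
    ∀ δ : Fin n → ℝ,
      ∫ ω, TCLu n C (fun i => θ i ω) q ∂μ ≤
        ∫ ω, TCLu n C (fun i => θ i ω) δ ∂μ := by
  intro δ
  have isProbabilityMeasure_map (i) : IsProbabilityMeasure (μ.map (θ i)) :=
    Measure.isProbabilityMeasure_map (hθ i).aemeasurable
  have hq_median (i) : q i = quantile (μ.map (θ i)) (1 / 2) := by
    simp_rw [hq i, quantile, cdf_eq_real, map_measureReal_apply (hθ i) measurableSet_Iic]
    rfl
  have expected_loss (d : Fin n → ℝ) : ∫ ω, TCLu n C (θ · ω) d ∂μ =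
      1 / n * ∑ i, ∫ t, misclassificationLoss C t (d i) ∂μ.map (θ i) := by
    simp_rw [TCLu_eq_sum_misclassificationLoss]
    rw [integral_const_mul,
      integral_finsetSum (f := fun i ω => misclassificationLoss C (θ i ω) (d i)) _ fun i _ =>
        (integrable_misclassificationLoss _ C (d i)).comp_measurable (hθ i)]
    congr 1
    exact Finset.sum_congr rfl fun i _ => (integral_map (hθ i).aemeasurable
      (measurable_misclassificationLoss C (d i)).aestronglyMeasurable).symm
  rw [expected_loss, expected_loss]
  gcongr _ * ∑ i, ?_
  rw [hq_median i]
  exact integral_misclassificationLoss_median_le _ C (δ i)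
end

section
/- Value of the minimal posterior weighted TCL risk: Let θ₁,…,θₙ be real random variables, C ∈ ℝ, p ∈ (0,1), Fᵢ(x) = P(θᵢ ≤ x), and qᵢ = inf{x : Fᵢ(x) ≥ 1−p}. Then the expected weighted threshold classification loss attained by the vector of posterior (1−p)-quantiles equals E[TCL_p(C,θ,q)] = (1/n)Σᵢ min{ p·Fᵢ(C), (1−p)·(1 − Fᵢ(C)) }. -/
/-!
The loss splits over the coordinates. For a single coordinate with law `ν` and decision `d`,
the expected loss is `(1 - p) (1 - F C)` if `d ≤ C` and `p F C` otherwise, where `F` is the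
cdf of `ν`; since `p F - (1 - p)(1 - F) = F - (1 - p)`, the smaller of the two is the first one
exactly when `1 - p ≤ F C`. For the `(1 - p)`-quantile `q` of `ν` this is equivalent to `q ≤ C`
(the Galois connection between a right-continuous cdf and its generalized inverse), so the
quantile always picks the smaller value.
-/

open MeasureTheory

/-- The `p`-weighted threshold classification loss
`TCL_p(C, θ, δ) = (1/n) Σᵢ [p · 1{θᵢ ≤ C, δᵢ > C} + (1−p) · 1{θᵢ > C, δᵢ ≤ C}]`. -/
noncomputable def TCLw (n : ℕ) (p C : ℝ) (θ δ : Fin n → ℝ) : ℝ :=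
  (1 / (n : ℝ)) * ∑ i, (p * (if θ i ≤ C ∧ C < δ i then (1 : ℝ) else 0)
    + (1 - p) * (if C < θ i ∧ δ i ≤ C then (1 : ℝ) else 0))

open ProbabilityTheory Set Filter Topology

lemma StieltjesFunction.sInf_setOf_le_le_iff {R : Type*} [ConditionallyCompleteLinearOrder R]
    [TopologicalSpace R] [OrderTopology R] (f : StieltjesFunction R) {r : ℝ} {C : R}
    (hne : {x | r ≤ f x}.Nonempty) (hbdd : BddBelow {x | r ≤ f x}) :
    sInf {x | r ≤ f x} ≤ C ↔ r ≤ f C := by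
  refine ⟨fun hC => ?_, fun hC => csInf_le hbdd hC⟩
  set m := sInf {x | r ≤ f x}
  have : (𝓝[{x | r ≤ f x}] m).NeBot :=
    mem_closure_iff_nhdsWithin_neBot.mp (csInf_mem_closure hne hbdd)
  have hlim : Tendsto f (𝓝[{x | r ≤ f x}] m) (𝓝 (f m)) :=
    (f.right_continuous m).mono_left (nhdsWithin_mono _ fun x hx => csInf_le hbdd hx)
  have hm : r ≤ f m := ge_of_tendsto hlim (eventually_nhdsWithin_of_forall fun x hx => hx)
  exact hm.trans (f.mono hC)

lemma sInf_setOf_le_cdf_le_iff (ν : Measure ℝ) [IsProbabilityMeasure ν] {r C : ℝ}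
    (hr : r ∈ Ioo (0 : ℝ) 1) :
    sInf {x | r ≤ cdf ν x} ≤ C ↔ r ≤ cdf ν C := by
  obtain ⟨x₀, hx₀⟩ := ((tendsto_cdf_atBot ν).eventually (eventually_lt_nhds hr.1)).exists
  obtain ⟨x₁, hx₁⟩ := ((tendsto_cdf_atTop ν).eventually (eventually_gt_nhds hr.2)).exists
  refine (cdf ν).sInf_setOf_le_le_iff ⟨x₁, hx₁.le⟩ ⟨x₀, fun x hx => ?_⟩
  by_contra! hxx₀
  exact hx₀.not_ge (hx.trans ((cdf ν).mono hxx₀.le))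

noncomputable def thresholdLoss (p C t d : ℝ) : ℝ :=
  p * (if t ≤ C ∧ C < d then (1 : ℝ) else 0) + (1 - p) * (if C < t ∧ d ≤ C then (1 : ℝ) else 0)

lemma TCLw_eq_sum_thresholdLoss (n : ℕ) (p C : ℝ) (θ δ : Fin n → ℝ) :
    TCLw n p C θ δ = (1 / (n : ℝ)) * ∑ i, thresholdLoss p C (θ i) (δ i) :=
  rfl

lemma thresholdLoss_eq_indicator (p C d : ℝ) :
    (thresholdLoss p C · d) =
      if d ≤ C then (Ioi C).indicator fun _ => 1 - p else (Iic C).indicator fun _ => p := by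
  ext t
  by_cases hd : d ≤ C <;> by_cases ht : t ≤ C <;>
    simp [thresholdLoss, hd, ht, indicator, not_le.mp]

lemma integrable_thresholdLoss (ν : Measure ℝ) [IsFiniteMeasure ν] (p C d : ℝ) :
    Integrable (thresholdLoss p C · d) ν := by
  rw [thresholdLoss_eq_indicator]
  split_ifs
  · exact (integrable_const _).indicator measurableSet_Ioi
  · exact (integrable_const _).indicator measurableSet_Iic

lemma integral_thresholdLoss (ν : Measure ℝ) [IsProbabilityMeasure ν] (p C d : ℝ) :
    ∫ t, thresholdLoss p C t d ∂ν =
      if d ≤ C then (1 - p) * (1 - cdf ν C) else p * cdf ν C := by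
  rw [thresholdLoss_eq_indicator, cdf_eq_real]
  split_ifs
  · rw [integral_indicator_const _ measurableSet_Ioi, ← compl_Iic,
      probReal_compl_eq_one_sub measurableSet_Iic, smul_eq_mul, mul_comm]
  · rw [integral_indicator_const _ measurableSet_Iic, smul_eq_mul, mul_comm]

lemma min_mul_mul_one_sub_eq_ite (p F : ℝ) :
    min (p * F) ((1 - p) * (1 - F)) = if 1 - p ≤ F then (1 - p) * (1 - F) else p * F := by
  split_ifs with h
  · exact min_eq_right (by nlinarith)
  · exact min_eq_left (by nlinarith)

lemma integral_thresholdLoss_quantile (ν : Measure ℝ) [IsProbabilityMeasure ν] {p : ℝ}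
    (hp : p ∈ Ioo (0 : ℝ) 1) (C : ℝ) :
    ∫ t, thresholdLoss p C t (sInf {x | 1 - p ≤ cdf ν x}) ∂ν =
      min (p * cdf ν C) ((1 - p) * (1 - cdf ν C)) := by
  have h1p : 1 - p ∈ Ioo (0 : ℝ) 1 := ⟨by linarith [hp.2], by linarith [hp.1]⟩
  rw [integral_thresholdLoss, min_mul_mul_one_sub_eq_ite]
  exact if_congr (sInf_setOf_le_cdf_le_iff ν h1p) rfl rfl

/-- **Value of the minimal posterior weighted TCL risk.** The expected weighted threshold
classification loss of the vector of posterior `(1−p)`-quantiles equals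
`(1/n) Σᵢ min(p Fᵢ(C), (1−p)(1 − Fᵢ(C)))`. -/
theorem tcl_weighted_minimal_risk_value
    {Ω : Type*} [MeasurableSpace Ω] (μ : Measure Ω) [IsProbabilityMeasure μ]
    {n : ℕ} (θ : Fin n → Ω → ℝ) (hθ : ∀ i, Measurable (θ i))
    (C p : ℝ) (hp : p ∈ Set.Ioo (0 : ℝ) 1)
    (F : Fin n → ℝ → ℝ) (hF : ∀ i x, F i x = (μ {ω | θ i ω ≤ x}).toReal)
    (q : Fin n → ℝ) (hq : ∀ i, q i = sInf {x : ℝ | 1 - p ≤ F i x}) :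
    ∫ ω, TCLw n p C (fun i => θ i ω) q ∂μ =
      (1 / (n : ℝ)) * ∑ i, min (p * F i C) ((1 - p) * (1 - F i C)) := by
  have hint : ∀ i, Integrable (fun ω => thresholdLoss p C (θ i ω) (q i)) μ := fun i =>
    (integrable_thresholdLoss _ p C (q i)).comp_aemeasurable (hθ i).aemeasurable
  have hterm : ∀ i, ∫ ω, thresholdLoss p C (θ i ω) (q i) ∂μ =
      min (p * F i C) ((1 - p) * (1 - F i C)) := by
    intro i
    have := Measure.isProbabilityMeasure_map (μ := μ) (hθ i).aemeasurable
    have hF_cdf : F i = cdf (μ.map (θ i)) := funext fun x => by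
      rw [hF, cdf_eq_real, map_measureReal_apply (hθ i) measurableSet_Iic]
      rfl
    rw [← integral_map (hθ i).aemeasurable
      (integrable_thresholdLoss _ p C (q i)).aestronglyMeasurable, hq i, hF_cdf]
    exact integral_thresholdLoss_quantile _ hp C
  simp only [TCLw_eq_sum_thresholdLoss]
  rw [integral_const_mul, integral_finsetSum _ fun i _ => hint i]
  simp only [hterm]
end

section
/- Posterior expected RCL in terms of the rank-based false negative rate: Let θ = (θ₁,…,θₙ) be a random vector in ℝⁿ with P(θᵢ = θⱼ) = 0 for i ≠ j, let γ ∈ [0,1], let δ be a percentile-rank vector (δᵢ = τ(i)/(n+1) for a permutation τ), and assume ΣᵢP(Pᵢ(θ) > γ) > 0. Define the posterior true positive rate TPR(γ,θ,δ) = [Σᵢ1{δᵢ > γ}·P(Pᵢ(θ) > γ)]/[ΣᵢP(Pᵢ(θ) > γ)]. Then E[RCL(γ,θ,δ)] = (2/n)·(1 − TPR(γ,θ,δ))·ΣᵢP(Pᵢ(θ) > γ). -/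
/-!
Off a null set the scores `θᵢ` are distinct, so their ranks are a permutation of `1, …, n`, as
are the entries of `(n+1)δ`; hence exactly as many percentile ranks as decisions exceed `γ`.
With `aᵢ = 1{δᵢ > γ}` and `bᵢ = 1{Pᵢ(θ) > γ}`, the `i`-th summand of the loss is
`aᵢ + bᵢ - 2aᵢbᵢ`, so `Σ aᵢ = Σ bᵢ` turns the loss into `2/n` times the false-negative
count `Σ (1 - aᵢ) bᵢ`. Its expectation is `(2/n) (Σ pᵢ - Σ aᵢ pᵢ) = (2/n)(1 - TPR) Σ pᵢ`,
where `pᵢ = P(Pᵢ(θ) > γ)`.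
-/

open MeasureTheory

/-- The rank of the `i`-th component of `x`: `Rᵢ(x) = Σⱼ 1{xᵢ ≥ xⱼ}`. -/
noncomputable def rankOf {n : ℕ} (x : Fin n → ℝ) (i : Fin n) : ℕ :=
  (Finset.univ.filter fun j => x j ≤ x i).card

/-- The percentile rank of the `i`-th component: `Pᵢ(x) = Rᵢ(x)/(n+1)`. -/
noncomputable def percOf {n : ℕ} (x : Fin n → ℝ) (i : Fin n) : ℝ :=
  (rankOf x i : ℝ) / ((n : ℝ) + 1)

/-- The rank classification loss
`RCL(γ, x, δ) = (1/n) Σᵢ [1{Pᵢ(x) ≤ γ, δᵢ > γ} + 1{Pᵢ(x) > γ, δᵢ ≤ γ}]`. -/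
noncomputable def RCL (n : ℕ) (γ : ℝ) (x δ : Fin n → ℝ) : ℝ :=
  (1 / (n : ℝ)) * ∑ i, ((if percOf x i ≤ γ ∧ γ < δ i then (1 : ℝ) else 0)
    + (if γ < percOf x i ∧ δ i ≤ γ then (1 : ℝ) else 0))

section Ranks

variable {n : ℕ} {x : Fin n → ℝ}

lemma rankOf_lt_rankOf {i j : Fin n} (h : x i < x j) : rankOf x i < rankOf x j :=
  Finset.card_lt_card <| Finset.ssubset_iff_of_subset
    (Finset.monotone_filter_right _ fun _ _ hk => hk.trans h.le) |>.mpr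
    ⟨j, by simp, by simpa using h⟩

lemma rankOf_injective (hx : Function.Injective x) : Function.Injective (rankOf x) := by
  intro i j hij
  by_contra hne
  rcases (hx.ne hne).lt_or_gt with h | h
  · exact (rankOf_lt_rankOf h).ne hij
  · exact (rankOf_lt_rankOf h).ne' hij

lemma rankOf_mem_Icc (i : Fin n) : rankOf x i ∈ Finset.Icc 1 n :=
  Finset.mem_Icc.mpr
    ⟨Finset.card_pos.mpr ⟨i, by simp⟩, (Finset.card_filter_le _ _).trans (by simp)⟩

lemma measurable_rankOf (i : Fin n) : Measurable fun x : Fin n → ℝ => rankOf x i := by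
  simp_rw [rankOf, Finset.card_filter]
  exact Finset.measurable_sum _ fun j _ =>
    Measurable.ite (measurableSet_le (measurable_pi_apply j) (measurable_pi_apply i))
      measurable_const measurable_const

lemma measurable_percOf (i : Fin n) : Measurable fun x : Fin n → ℝ => percOf x i :=
  (measurable_from_nat.comp (measurable_rankOf i)).div_const _

end Ranks

lemma Finset.sum_comp_eq_sum_Icc {M : Type*} [AddCommMonoid M] {n : ℕ} {f : Fin n → ℕ}
    (hf : Function.Injective f) (hmem : ∀ i, f i ∈ Finset.Icc 1 n) (g : ℕ → M) :
    ∑ i, g (f i) = ∑ k ∈ Finset.Icc 1 n, g k := by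
  have himage : Finset.univ.image f = Finset.Icc 1 n :=
    Finset.eq_of_subset_of_card_le (Finset.image_subset_iff.mpr fun i _ => hmem i)
      (by simp [Finset.card_image_of_injective _ hf])
  rw [← himage, Finset.sum_image hf.injOn]

lemma sum_ite_lt_eq_sum_ite_lt_percOf {n : ℕ} {x : Fin n → ℝ} (hx : Function.Injective x) (γ : ℝ)
    (τ : Equiv.Perm (Fin n)) {δ : Fin n → ℝ}
    (hδ : ∀ i, δ i = (((τ i : Fin n) : ℕ) + 1 : ℝ) / ((n : ℝ) + 1)) :
    ∑ i, (if γ < δ i then (1 : ℝ) else 0) = ∑ i, (if γ < percOf x i then (1 : ℝ) else 0) := by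
  have hτ : Function.Injective fun i => ((τ i : Fin n) : ℕ) + 1 := fun i j h =>
    τ.injective (Fin.val_injective (Nat.succ_injective h))
  have hτ_mem (i : Fin n) : ((τ i : Fin n) : ℕ) + 1 ∈ Finset.Icc 1 n :=
    Finset.mem_Icc.mpr ⟨Nat.le_add_left 1 _, (τ i).isLt⟩
  let g : ℕ → ℝ := fun k => if γ < (k : ℝ) / ((n : ℝ) + 1) then 1 else 0
  calc ∑ i, (if γ < δ i then (1 : ℝ) else 0) = ∑ i, g (((τ i : Fin n) : ℕ) + 1) := by
        simp [g, hδ]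
    _ = ∑ i, g (rankOf x i) := by
        rw [Finset.sum_comp_eq_sum_Icc hτ hτ_mem,
          Finset.sum_comp_eq_sum_Icc (rankOf_injective hx) rankOf_mem_Icc]

lemma RCL_eq_of_injective {n : ℕ} {x : Fin n → ℝ} (hx : Function.Injective x) (γ : ℝ)
    (τ : Equiv.Perm (Fin n)) {δ : Fin n → ℝ}
    (hδ : ∀ i, δ i = (((τ i : Fin n) : ℕ) + 1 : ℝ) / ((n : ℝ) + 1)) :
    RCL n γ x δ = 2 / n * ∑ i, (1 - if γ < δ i then (1 : ℝ) else 0) *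
      (if γ < percOf x i then (1 : ℝ) else 0) := by
  set a : Fin n → ℝ := fun i => if γ < δ i then 1 else 0
  set b : Fin n → ℝ := fun i => if γ < percOf x i then 1 else 0
  have hterm (i : Fin n) : ((if percOf x i ≤ γ ∧ γ < δ i then (1 : ℝ) else 0)
      + if γ < percOf x i ∧ δ i ≤ γ then (1 : ℝ) else 0) = a i + b i - 2 * (a i * b i) := by
    rcases lt_or_ge γ (δ i) with hd | hd <;> rcases lt_or_ge γ (percOf x i) with hp | hp <;>
      norm_num [a, b, hd, hp, not_le_of_gt, not_lt_of_ge]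
  have hcount : ∑ i, a i = ∑ i, b i := sum_ite_lt_eq_sum_ite_lt_percOf hx γ τ hδ
  simp only [RCL, hterm, Finset.sum_sub_distrib, Finset.sum_add_distrib, ← Finset.mul_sum,
    sub_mul, one_mul, hcount]
  ring

lemma ae_injective_of_measure_eq_zero {Ω ι α : Type*} [MeasurableSpace Ω] {μ : Measure Ω}
    [Countable ι] {X : ι → Ω → α} (h : ∀ i j, i ≠ j → μ {ω | X i ω = X j ω} = 0) :
    ∀ᵐ ω ∂μ, Function.Injective fun i => X i ω := by
  have hne : ∀ᵐ ω ∂μ, ∀ i j, i ≠ j → X i ω ≠ X j ω := by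
    refine ae_all_iff.mpr fun i => ae_all_iff.mpr fun j => ?_
    by_cases hij : i = j
    · exact Filter.Eventually.of_forall fun _ h => absurd hij h
    · filter_upwards [measure_eq_zero_iff_ae_notMem.mp (h i j hij)] with ω hω _
      exact hω
  filter_upwards [hne] with ω hω i j hij
  by_contra h
  exact hω i j h hij

lemma integrable_ite_one_zero {Ω : Type*} [MeasurableSpace Ω] (μ : Measure Ω) [IsFiniteMeasure μ]
    {p : Ω → Prop} [DecidablePred p] (hp : MeasurableSet {ω | p ω}) :
    Integrable (fun ω => if p ω then (1 : ℝ) else 0) μ :=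
  (integrable_const (1 : ℝ)).indicator hp |>.congr <|
    Filter.Eventually.of_forall fun ω => by simp [Set.indicator_apply]

lemma integral_ite_one_zero {Ω : Type*} [MeasurableSpace Ω] (μ : Measure Ω) {p : Ω → Prop}
    [DecidablePred p] (hp : MeasurableSet {ω | p ω}) :
    ∫ ω, (if p ω then (1 : ℝ) else 0) ∂μ = μ.real {ω | p ω} := by
  rw [← integral_indicator_one hp]
  congr with ω
  simp [Set.indicator_apply]

theorem rcl_fnr_decomposition_general
    {Ω : Type*} [MeasurableSpace Ω] (μ : Measure Ω) [IsProbabilityMeasure μ]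
    {n : ℕ} (θ : Fin n → Ω → ℝ) (hθ : ∀ i, Measurable (θ i))
    (hdistinct : ∀ i j, i ≠ j → μ {ω | θ i ω = θ j ω} = 0)
    (γ : ℝ)
    (τ : Equiv.Perm (Fin n)) (δ : Fin n → ℝ)
    (hδ : ∀ i, δ i = (((τ i : Fin n) : ℕ) + 1 : ℝ) / ((n : ℝ) + 1))
    (hpos : 0 < ∑ i, (μ {ω | γ < percOf (fun j => θ j ω) i}).toReal)
    (TPR : ℝ)
    (hTPR : TPR =
      (∑ i, (if γ < δ i then (1 : ℝ) else 0) *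
        (μ {ω | γ < percOf (fun j => θ j ω) i}).toReal) /
      ∑ i, (μ {ω | γ < percOf (fun j => θ j ω) i}).toReal) :
    ∫ ω, RCL n γ (fun j => θ j ω) δ ∂μ =
      (2 / (n : ℝ)) * (1 - TPR) *
        ∑ i, (μ {ω | γ < percOf (fun j => θ j ω) i}).toReal := by
  have hA (i : Fin n) : MeasurableSet {ω | γ < percOf (fun j => θ j ω) i} :=
    measurableSet_lt measurable_const
      ((measurable_percOf i).comp (measurable_pi_lambda _ hθ))
  have hRCL : ∀ᵐ ω ∂μ, RCL n γ (fun j => θ j ω) δ = 2 / n * ∑ i,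
      (1 - if γ < δ i then (1 : ℝ) else 0) *
        (if γ < percOf (fun j => θ j ω) i then (1 : ℝ) else 0) :=
    (ae_injective_of_measure_eq_zero hdistinct).mono fun ω hω => RCL_eq_of_injective hω γ τ hδ
  rw [integral_congr_ae hRCL, integral_const_mul, integral_finsetSum _ fun i _ =>
    (integrable_ite_one_zero μ (hA i)).const_mul _]
  have hterm (i : Fin n) : ∫ ω, (1 - if γ < δ i then (1 : ℝ) else 0) *
      (if γ < percOf (fun j => θ j ω) i then (1 : ℝ) else 0) ∂μ =
      (1 - if γ < δ i then (1 : ℝ) else 0) * (μ {ω | γ < percOf (fun j => θ j ω) i}).toReal := by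
    rw [integral_const_mul, integral_ite_one_zero μ (hA i), measureReal_def]
  rw [Finset.sum_congr rfl fun i _ => hterm i, hTPR]
  simp only [sub_mul, one_mul, Finset.sum_sub_distrib]
  field_simp [hpos.ne']

/-- **Posterior expected RCL in terms of the rank-based false negative rate.** For a
percentile-rank decision vector `δ`,
`E[RCL(γ,θ,δ)] = (2/n)(1 − TPR(γ,θ,δ)) Σᵢ P(Pᵢ(θ) > γ)`. -/
theorem rcl_fnr_decomposition
    {Ω : Type*} [MeasurableSpace Ω] (μ : Measure Ω) [IsProbabilityMeasure μ]
    {n : ℕ} (θ : Fin n → Ω → ℝ) (hθ : ∀ i, Measurable (θ i))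
    (hdistinct : ∀ i j, i ≠ j → μ {ω | θ i ω = θ j ω} = 0)
    (γ : ℝ) (hγ : γ ∈ Set.Icc (0 : ℝ) 1)
    (τ : Equiv.Perm (Fin n)) (δ : Fin n → ℝ)
    (hδ : ∀ i, δ i = (((τ i : Fin n) : ℕ) + 1 : ℝ) / ((n : ℝ) + 1))
    (hpos : 0 < ∑ i, (μ {ω | γ < percOf (fun j => θ j ω) i}).toReal)
    (TPR : ℝ)
    (hTPR : TPR =
      (∑ i, (if γ < δ i then (1 : ℝ) else 0) *
        (μ {ω | γ < percOf (fun j => θ j ω) i}).toReal) /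
      ∑ i, (μ {ω | γ < percOf (fun j => θ j ω) i}).toReal) :
    ∫ ω, RCL n γ (fun j => θ j ω) δ ∂μ =
      (2 / (n : ℝ)) * (1 - TPR) *
        ∑ i, (μ {ω | γ < percOf (fun j => θ j ω) i}).toReal :=
  rcl_fnr_decomposition_general μ θ hθ hdistinct γ τ δ hδ hpos TPR hTPR
end
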